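/- Let μ be a probability measure on ℤ with G(t) = μ((t,∞)) > 0 for a threshold x⁻. Let ν_x(A) = μ(A ∩ (x⁻,∞))/G(x⁻) and let ν* = (1/n) Σ_{j=1}^n σ^j(μ^{⊗(n−1)} ⊗ ν_x), where σ^j swaps the last and j-th coordinates. Then ν* ≪ μ^{⊗n} with dν*/dμ^{⊗n}(y) = (1/(n·G(x⁻))) · Σ_{i=1}^n 1{yᵢ > x⁻}. -/
import Mathlib


open MeasureTheory
open scoped ENNReal

/-- The symmetrized single-big-jump measure
`ν* = (1/n) Σⱼ σʲ(μ^{⊗(n−1)} ⊗ ν_x)` is absolutely continuous w.r.t. `μ^{⊗n}`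
with density `y ↦ (Σᵢ 1{yᵢ > x⁻}) / (n G(x⁻))`.  (Here there are `n+1`
coordinates, so `n+1 ≥ 1` plays the role of `n`.) -/
theorem symmetrized_big_jump_density (μ : Measure ℤ) [IsProbabilityMeasure μ]
    (n : ℕ) (xm : ℤ) (hG : 0 < μ (Set.Ioi xm)) :
    letI νx : Measure ℤ := (μ (Set.Ioi xm))⁻¹ • μ.restrict (Set.Ioi xm)
    letI base : Measure (Fin (n + 1) → ℤ) :=
      Measure.pi fun i => if i = Fin.last n then νx else μ
    letI νstar : Measure (Fin (n + 1) → ℤ) :=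
      ((n : ℝ≥0∞) + 1)⁻¹ •
        ∑ j : Fin (n + 1),
          Measure.map (fun y k => y (Equiv.swap j (Fin.last n) k)) base
    νstar ≪ Measure.pi (fun _ : Fin (n + 1) => μ) ∧
    ∀ᵐ y ∂(Measure.pi fun _ : Fin (n + 1) => μ),
      νstar.rnDeriv (Measure.pi fun _ => μ) y
        = ((Finset.univ.filter fun i => xm < y i).card : ℝ≥0∞)
            / (((n : ℝ≥0∞) + 1) * μ (Set.Ioi xm)) := by
  set νx : Measure ℤ := (μ (Set.Ioi xm))⁻¹ • μ.restrict (Set.Ioi xm) with hνxdef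
  set base : Measure (Fin (n + 1) → ℤ) :=
    Measure.pi fun i => if i = Fin.last n then νx else μ with hbasedef
  set νstar : Measure (Fin (n + 1) → ℤ) :=
    ((n : ℝ≥0∞) + 1)⁻¹ •
      ∑ j : Fin (n + 1),
        Measure.map (fun y k => y (Equiv.swap j (Fin.last n) k)) base with hνstardef
  set G : ℝ≥0∞ := μ (Set.Ioi xm) with hGdef
  have hGtop : G ≠ ⊤ := measure_ne_top μ _
  have hG0 : G ≠ 0 := hG.ne'
  set P : Measure (Fin (n + 1) → ℤ) := Measure.pi fun _ => μ with hP
  -- νx is a probability measure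
  have hνxprob : IsProbabilityMeasure νx := by
    constructor
    simp only [νx, Measure.smul_apply, Measure.restrict_apply MeasurableSet.univ,
      Set.univ_inter, smul_eq_mul]
    exact ENNReal.inv_mul_cancel hG0 hGtop
  haveI : ∀ i : Fin (n + 1), IsProbabilityMeasure (if i = Fin.last n then νx else μ) := by
    intro i; split <;> infer_instance
  haveI : ∀ i : Fin (n + 1), SigmaFinite (if i = Fin.last n then νx else μ) :=
    fun i => inferInstance
  -- singleton value of νx
  have hνx_sing : ∀ t : ℤ, νx {t} = (if xm < t then G⁻¹ else 0) * μ {t} := by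
    intro t
    simp only [νx, Measure.smul_apply, Measure.restrict_apply (measurableSet_singleton t),
      smul_eq_mul]
    by_cases h : xm < t
    · rw [if_pos h]
      have : {t} ∩ Set.Ioi xm = ({t} : Set ℤ) := by
        ext s; simp (config := { contextual := true }) [Set.mem_Ioi, h]
      rw [this]
    · rw [if_neg h]
      have : {t} ∩ Set.Ioi xm = (∅ : Set ℤ) := by
        ext s; simp (config := { contextual := true }) [Set.mem_Ioi, h]
      rw [this]; simp
  -- the density
  set f : (Fin (n + 1) → ℤ) → ℝ≥0∞ := fun y =>
    ((Finset.univ.filter fun i => xm < y i).card : ℝ≥0∞) / (((n : ℝ≥0∞) + 1) * G)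
    with hf
  -- key equality
  have key : νstar = P.withDensity f := by
    apply Measure.ext_of_singleton
    intro y
    -- RHS
    have hQ : P {y} = ∏ i, μ {y i} := by
      rw [← Set.univ_pi_singleton y, hP, Measure.pi_pi]
    have hRHS : P.withDensity f {y} = f y * ∏ i, μ {y i} := by
      rw [withDensity_apply f (measurableSet_singleton y), lintegral_singleton, hQ]
    rw [hRHS]
    -- LHS
    have hmap : ∀ j : Fin (n + 1),
        Measure.map (fun y k => y (Equiv.swap j (Fin.last n) k)) base {y}
          = (if xm < y j then G⁻¹ else 0) * ∏ i, μ {y i} := by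
      intro j
      set e : Equiv.Perm (Fin (n + 1)) := Equiv.swap j (Fin.last n) with he
      rw [Measure.map_apply (measurable_of_countable _) (measurableSet_singleton y)]
      have hpre : (fun y' k => y' (e k)) ⁻¹' {y} = {fun k => y (e.symm k)} := by
        ext z
        simp only [Set.mem_preimage, Set.mem_singleton_iff, funext_iff]
        constructor
        · intro h k
          have := h (e.symm k); simpa using this
        · intro h k
          have := h (e k); simpa using this
      rw [hpre, ← Set.univ_pi_singleton, Measure.pi_pi]
      have hfac : ∀ i : Fin (n + 1),
          (if i = Fin.last n then νx else μ) {y (e.symm i)}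
            = (if i = Fin.last n then (if xm < y (e.symm i) then G⁻¹ else 0) else 1)
                * μ {y (e.symm i)} := by
        intro i
        by_cases h : i = Fin.last n
        · rw [if_pos h, if_pos h, hνx_sing]
        · simp [h]
      calc (∏ i, (if i = Fin.last n then νx else μ) {y (e.symm i)})
          = ∏ i, ((if i = Fin.last n then (if xm < y (e.symm i) then G⁻¹ else 0) else 1)
              * μ {y (e.symm i)}) := Finset.prod_congr rfl fun i _ => hfac i
        _ = (∏ i, (if i = Fin.last n then (if xm < y (e.symm i) then G⁻¹ else 0) else 1))
              * ∏ i, μ {y (e.symm i)} := Finset.prod_mul_distrib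
        _ = (if xm < y (e.symm (Fin.last n)) then G⁻¹ else 0) * ∏ i, μ {y (e.symm i)} := by
              rw [Finset.prod_ite_eq' Finset.univ (Fin.last n)
                (fun i => if xm < y (e.symm i) then G⁻¹ else 0), if_pos (Finset.mem_univ _)]
        _ = (if xm < y j then G⁻¹ else 0) * ∏ i, μ {y i} := by
              rw [Equiv.prod_comp e.symm (fun i => μ {y i})]
              congr 2
              simp [he]
    have hsum : νstar {y}
        = ((n : ℝ≥0∞) + 1)⁻¹ * ∑ j : Fin (n + 1),
            (if xm < y j then G⁻¹ else 0) * ∏ i, μ {y i} := by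
      simp only [νstar, Measure.smul_apply, Measure.finset_sum_apply, smul_eq_mul]
      congr 1
      exact Finset.sum_congr rfl fun j _ => hmap j
    rw [hsum]
    have hsum2 : (∑ j : Fin (n + 1), (if xm < y j then G⁻¹ else 0) * ∏ i, μ {y i})
        = ((Finset.univ.filter fun i => xm < y i).card : ℝ≥0∞) * G⁻¹ * ∏ i, μ {y i} := by
      rw [← Finset.sum_mul]
      congr 1
      rw [← Finset.sum_boole (fun j => xm < y j) Finset.univ, Finset.sum_mul]
      exact Finset.sum_congr rfl fun j _ => by split <;> simp
    rw [hsum2, hf]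
    have hmulinv : (((n : ℝ≥0∞) + 1) * G)⁻¹ = ((n : ℝ≥0∞) + 1)⁻¹ * G⁻¹ :=
      ENNReal.mul_inv (Or.inl (by simp)) (Or.inr hG0)
    simp only [hf, ENNReal.div_eq_inv_mul, hmulinv]
    ring
  constructor
  · rw [key]; exact withDensity_absolutelyContinuous _ _
  · have hrn := Measure.rnDeriv_withDensity P (measurable_of_countable f)
    rw [key]
    filter_upwards [hrn] with y hy
    rw [hy]
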